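/- arXiv:1511.02849 — 6 statements merged into one kernel-verified Lean document; each statement's English description precedes it below -/
import Mathlib

section
/- Let X be a topological space such that every point has a neighborhood basis of clopen sets (ind X = 0), and let f : X → ℝ be a continuous injection. Then there exists a continuous injection of X into the Cantor set 2^ℕ. -/
/-!
Enumerate the pairs of rationals `r < t`. Since `f` is injective, at most one point `x` has
`f x = r`; by zero-dimensionality it has a clopen neighbourhood `V ⊆ f ⁻¹' Iio t`, and then
`f ⁻¹' Iio r ∪ V = f ⁻¹' Iic r ∪ V` is clopen and lies between `f ⁻¹' Iio r` and `f ⁻¹' Iio t`.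
These countably many clopen sets separate the points of `X`, so their indicator functions
give a continuous injection into `ℕ → Bool`.
-/

open Set Function

section ClopenBetween

variable {X α : Type*} [TopologicalSpace X] [TopologicalSpace α] [LinearOrder α]
  [OrderClosedTopology α]

lemma exists_isClopen_preimage_singleton_subset
    (hind : ∀ (x : X), ∀ U ∈ nhds x, ∃ V, IsClopen V ∧ V ∈ nhds x ∧ V ⊆ U)
    {f : X → α} (hf : Continuous f) {r t : α} (hr : (f ⁻¹' {r}).Subsingleton) (hrt : r < t) :
    ∃ V, IsClopen V ∧ f ⁻¹' {r} ⊆ V ∧ V ⊆ f ⁻¹' Iio t := by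
  rcases (f ⁻¹' {r}).eq_empty_or_nonempty with hempty | ⟨x, hx⟩
  · exact ⟨∅, isClopen_empty, hempty.subset, empty_subset _⟩
  have hU : f ⁻¹' Iio t ∈ nhds x :=
    (isOpen_Iio.preimage hf).mem_nhds (by simpa [show f x = r from hx] using hrt)
  obtain ⟨V, hVc, hVx, hVU⟩ := hind x _ hU
  refine ⟨V, hVc, fun y hy => ?_, hVU⟩
  rw [hr hy hx]
  exact mem_of_mem_nhds hVx

lemma exists_isClopen_preimage_Iio_subset_subset
    (hind : ∀ (x : X), ∀ U ∈ nhds x, ∃ V, IsClopen V ∧ V ∈ nhds x ∧ V ⊆ U)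
    {f : X → α} (hf : Continuous f) {r t : α} (hr : (f ⁻¹' {r}).Subsingleton) (hrt : r < t) :
    ∃ C, IsClopen C ∧ f ⁻¹' Iio r ⊆ C ∧ C ⊆ f ⁻¹' Iio t := by
  obtain ⟨V, hVc, hrV, hVt⟩ := exists_isClopen_preimage_singleton_subset hind hf hr hrt
  have hIic : f ⁻¹' Iio r ∪ V = f ⁻¹' Iic r ∪ V := by
    rw [← Iio_union_right, preimage_union, union_assoc, union_eq_self_of_subset_left hrV]
  refine ⟨f ⁻¹' Iio r ∪ V, ⟨?_, (isOpen_Iio.preimage hf).union hVc.isOpen⟩,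
    subset_union_left, union_subset (preimage_mono (Iio_subset_Iio hrt.le)) hVt⟩
  rw [hIic]
  exact (isClosed_Iic.preimage hf).union hVc.isClosed

end ClopenBetween

lemma exists_continuous_injective_nat_bool_of_isClopen {X ι : Type*} [TopologicalSpace X]
    [Countable ι] [Nonempty ι] {C : ι → Set X} (hC : ∀ i, IsClopen (C i))
    (hsep : ∀ x y, (∀ i, x ∈ C i ↔ y ∈ C i) → x = y) :
    ∃ g : X → (ℕ → Bool), Continuous g ∧ Injective g := by
  obtain ⟨e, he⟩ := exists_surjective_nat ι
  refine ⟨fun x n => (C (e n)).boolIndicator x,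
    continuous_pi fun n => (continuous_boolIndicator_iff_isClopen _).mpr (hC _),
    fun x y hxy => hsep x y fun i => ?_⟩
  obtain ⟨n, rfl⟩ := he i
  simpa [boolIndicator] using congrFun hxy n

theorem stmt_4 {X : Type*} [TopologicalSpace X]
    (hind : ∀ (x : X), ∀ U ∈ nhds x, ∃ V, IsClopen V ∧ V ∈ nhds x ∧ V ⊆ U)
    (f : X → ℝ) (hf : Continuous f) (hinj : Function.Injective f) :
    ∃ g : X → (ℕ → Bool), Continuous g ∧ Function.Injective g := by
  let ι := {p : ℚ × ℚ // p.1 < p.2}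
  have : Nonempty ι := ⟨⟨(0, 1), zero_lt_one⟩⟩
  choose C hCc hrC hCt using fun p : ι =>
    exists_isClopen_preimage_Iio_subset_subset hind hf (r := (p.1.1 : ℝ)) (t := p.1.2)
      (fun _ hx _ hy => hinj (hx.trans hy.symm)) (by exact_mod_cast p.2)
  have hsep : ∀ x y, f x < f y → ∃ p, x ∈ C p ∧ y ∉ C p := by
    intro x y hxy
    obtain ⟨r, hxr, hry⟩ := exists_rat_btwn hxy
    obtain ⟨t, hrt, hty⟩ := exists_rat_btwn hry
    exact ⟨⟨(r, t), by exact_mod_cast hrt⟩, hrC _ hxr,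
      fun hy => (hCt _ hy).not_ge hty.le⟩
  refine exists_continuous_injective_nat_bool_of_isClopen hCc fun x y hC => hinj ?_
  by_contra hne
  rcases lt_or_gt_of_ne hne with h | h
  · obtain ⟨p, hx, hy⟩ := hsep x y h
    exact hy ((hC p).1 hx)
  · obtain ⟨p, hy, hx⟩ := hsep y x h
    exact hx ((hC p).2 hy)
end

section
/- Let X be a topological space with a clopen neighborhood basis at every point (ind X = 0), and let f : X → ℝ be a continuous injection. Then there exist a subspace Y of the Cantor set 2^ℕ and continuous maps g : X → Y and h : Y → ℝ such that f = h ∘ g and g is a bijection onto Y. -/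
/-!
Since `f` is injective, each fibre `f ⁻¹' {a}` is at most a point, so it has a clopen
neighbourhood inside `f ⁻¹' Iio b` for any `b > a`; adding `f ⁻¹' Iio a` gives a clopen set
squeezed between `f ⁻¹' Iio a` and `f ⁻¹' Iio b`. Doing this for all pairs of rationals yields
countably many clopen sets `U k`, and `g x := (x ∈ U k)ₖ` is continuous into `2^ℕ`. Finitely
many coordinates of `g x` pin `f x` down to any precision, so `f` factors continuously through
`g`, and `g` is injective because `f` is.
-/

open Set Filter Function Topology

def HasClopenNhdsBasis (X : Type*) [TopologicalSpace X] : Prop :=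
  ∀ x : X, ∀ U ∈ 𝓝 x, ∃ V, IsClopen V ∧ V ∈ 𝓝 x ∧ V ⊆ U

section ClopenSqueeze

variable {X α : Type*} [TopologicalSpace X] [TopologicalSpace α] {f : X → α}

theorem exists_isClopen_preimage_singleton_subset_s5 (hX : HasClopenNhdsBasis X)
    (hf : Continuous f) (hinj : Injective f) {a : α} {W : Set α} (hW : W ∈ 𝓝 a) :
    ∃ V, IsClopen V ∧ f ⁻¹' {a} ⊆ V ∧ V ⊆ f ⁻¹' W := by
  by_cases ha : a ∈ range f
  · obtain ⟨x, rfl⟩ := ha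
    obtain ⟨V, hVc, hVx, hVW⟩ := hX x _ (hf.continuousAt.preimage_mem_nhds hW)
    refine ⟨V, hVc, fun y hy => ?_, hVW⟩
    rw [hinj hy]
    exact mem_of_mem_nhds hVx
  · exact ⟨∅, isClopen_empty, fun y hy => (ha ⟨y, hy⟩).elim, empty_subset _⟩

theorem exists_isClopen_preimage_Iio_subset [LinearOrder α] [OrderClosedTopology α]
    (hX : HasClopenNhdsBasis X) (hf : Continuous f) (hinj : Injective f) {a b : α}
    (hab : a < b) : ∃ U, IsClopen U ∧ f ⁻¹' Iio a ⊆ U ∧ U ⊆ f ⁻¹' Iio b := by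
  obtain ⟨V, hVc, haV, hVb⟩ :=
    exists_isClopen_preimage_singleton_subset_s5 hX hf hinj (Iio_mem_nhds hab)
  have hIic : f ⁻¹' Iic a ∪ V = f ⁻¹' Iio a ∪ V := by
    rw [← Iio_union_right, preimage_union, union_assoc, union_eq_right.2 haV]
  refine ⟨f ⁻¹' Iio a ∪ V, ⟨?_, (isOpen_Iio.preimage hf).union hVc.isOpen⟩,
    subset_union_left, union_subset (preimage_mono (Iio_subset_Iio hab.le)) hVb⟩
  rw [← hIic]
  exact (isClosed_Iic.preimage hf).union hVc.isClosed

end ClopenSqueeze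

theorem exists_isClopen_seq_squeezing_preimage_Iio {X : Type*} [TopologicalSpace X]
    (hX : HasClopenNhdsBasis X) {f : X → ℝ} (hf : Continuous f) (hinj : Injective f) :
    ∃ U : ℕ → Set X, (∀ k, IsClopen (U k)) ∧
      ∀ a b : ℝ, a < b → ∃ k, f ⁻¹' Iio a ⊆ U k ∧ U k ⊆ f ⁻¹' Iio b := by
  have : Nonempty {p : ℚ × ℚ // p.1 < p.2} := ⟨⟨(0, 1), zero_lt_one⟩⟩
  obtain ⟨e, he⟩ := exists_surjective_nat {p : ℚ × ℚ // p.1 < p.2}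
  choose V hVc hVsub using fun p : {p : ℚ × ℚ // p.1 < p.2} =>
    exists_isClopen_preimage_Iio_subset hX hf hinj (Rat.cast_lt (K := ℝ).2 p.2)
  refine ⟨V ∘ e, fun k => hVc _, fun a b hab => ?_⟩
  obtain ⟨q, haq, hqb⟩ := exists_rat_btwn hab
  obtain ⟨r, hqr, hrb⟩ := exists_rat_btwn hqb
  obtain ⟨k, hk⟩ := he ⟨(q, r), Rat.cast_lt.1 hqr⟩
  have hVk := hVsub (e k)
  rw [hk] at hVk
  refine ⟨k, ?_, ?_⟩ <;> rw [comp_apply, hk]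
  · exact (preimage_mono (Iio_subset_Iio haq.le)).trans hVk.1
  · exact hVk.2.trans (preimage_mono (Iio_subset_Iio hrb.le))

section Factorization

variable {X Z α : Type*} [TopologicalSpace Z] [TopologicalSpace α]

/-- `hfg` says that `f` is continuous for the topology on `X` induced by `g`. -/
theorem continuous_comp_rangeSplitting {f : X → α} {g : X → Z}
    (hfg : ∀ x, Tendsto f (comap g (𝓝 (g x))) (𝓝 (f x))) :
    Continuous (f ∘ rangeSplitting g) := by
  refine continuous_iff_continuousAt.2 fun y => ?_
  have hy : g (rangeSplitting g y) = y := apply_rangeSplitting g y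
  have hsplit : Tendsto (rangeSplitting g) (𝓝 y) (comap g (𝓝 (g (rangeSplitting g y)))) := by
    have hval : g ∘ rangeSplitting g = Subtype.val := funext (apply_rangeSplitting g)
    rw [tendsto_comap_iff, hy, nhds_subtype, hval]
    exact tendsto_comap
  exact (hfg _).comp hsplit

theorem injective_of_tendsto_comap [T1Space α] {f : X → α} {g : X → Z} (hinj : Injective f)
    (hfg : ∀ x, Tendsto f (comap g (𝓝 (g x))) (𝓝 (f x))) : Injective g := by
  intro x y hxy
  have hy : pure y ≤ comap g (𝓝 (g x)) := by
    rw [← map_le_iff_le_comap, map_pure, hxy]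
    exact pure_le_nhds _
  have hfy : pure (f y) ≤ 𝓝 (f x) := (Filter.map_pure f y).symm.trans_le ((hfg x).mono_left hy)
  exact (hinj (pure_le_nhds_iff.1 hfy)).symm

end Factorization

section ClopenCode

variable {X : Type*} (U : ℕ → Set X)

noncomputable def clopenCode (x : X) : ℕ → Bool := fun k => (U k).boolIndicator x

theorem continuous_clopenCode [TopologicalSpace X] (hU : ∀ k, IsClopen (U k)) :
    Continuous (clopenCode U) :=
  continuous_pi fun k => (continuous_boolIndicator_iff_isClopen _).2 (hU k)

theorem eventually_mem_iff_of_clopenCode (x : X) (k : ℕ) :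
    ∀ᶠ y in comap (clopenCode U) (𝓝 (clopenCode U x)), y ∈ U k ↔ x ∈ U k := by
  have hk : ∀ᶠ c in 𝓝 (clopenCode U x), c k = clopenCode U x k :=
    (continuous_apply k).continuousAt.eventually_mem
      ((isOpen_discrete {clopenCode U x k}).mem_nhds rfl)
  filter_upwards [hk.comap (clopenCode U)] with y hy
  rwa [mem_iff_boolIndicator, mem_iff_boolIndicator, Bool.coe_iff_coe]

theorem tendsto_comap_clopenCode {α : Type*} [TopologicalSpace α] [LinearOrder α]
    [DenselyOrdered α] [OrderTopology α] {f : X → α}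
    (hU : ∀ a b : α, a < b → ∃ k, f ⁻¹' Iio a ⊆ U k ∧ U k ⊆ f ⁻¹' Iio b) (x : X) :
    Tendsto f (comap (clopenCode U) (𝓝 (clopenCode U x))) (𝓝 (f x)) := by
  refine tendsto_order.2 ⟨fun a ha => ?_, fun b hb => ?_⟩
  · obtain ⟨c, hac, hcx⟩ := exists_between ha
    obtain ⟨k, hck, hkx⟩ := hU c (f x) hcx
    have hx : x ∉ U k := fun h => lt_irrefl _ (hkx h)
    filter_upwards [eventually_mem_iff_of_clopenCode U x k] with y hy
    exact hac.trans_le (not_lt.1 fun h => hx (hy.1 (hck h)))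
  · obtain ⟨c, hxc, hcb⟩ := exists_between hb
    obtain ⟨k, hck, hkb⟩ := hU c b hcb
    filter_upwards [eventually_mem_iff_of_clopenCode U x k] with y hy
    exact hkb (hy.2 (hck hxc))

end ClopenCode

theorem stmt_5 {X : Type*} [TopologicalSpace X]
    (hind : ∀ (x : X), ∀ U ∈ nhds x, ∃ V, IsClopen V ∧ V ∈ nhds x ∧ V ⊆ U)
    (f : X → ℝ) (hf : Continuous f) (hinj : Function.Injective f) :
    ∃ (Y : Set (ℕ → Bool)) (g : X → Y) (h : Y → ℝ),
      Continuous g ∧ Continuous h ∧ f = h ∘ g ∧ Function.Bijective g := by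
  obtain ⟨U, hUc, hU⟩ := exists_isClopen_seq_squeezing_preimage_Iio hind hf hinj
  have hfg := tendsto_comap_clopenCode U hU
  have hg : Injective (clopenCode U) := injective_of_tendsto_comap hinj hfg
  refine ⟨range (clopenCode U), rangeFactorization (clopenCode U),
    f ∘ rangeSplitting (clopenCode U), (continuous_clopenCode U hUc).rangeFactorization,
    continuous_comp_rangeSplitting hfg, ?_, rangeFactorization_bijective.2 hg⟩
  funext x
  exact congrArg f ((leftInverse_rangeFactorization_iff_injective _).2 hg x).symm
end

section
/- Let L be a linearly ordered set with a topology generated by order-convex sets (a GO-space) that has a dense subset which is a countable union of subspaces each discrete in itself. Then L has a σ-disjoint π-base. -/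
/-!
For a point `a` of a set `A` that is discrete in itself, the union of all open convex sets meeting
`A` only in `a` (and contained in `[a, ∞)`, for the right-closed variant) is again open and convex.
As `a` runs over `A`, these right-closed hulls are pairwise disjoint, and so are the parts of the
plain hulls lying left of `a`; cutting them off at the successor or predecessor of `a` in another
`D j` keeps them disjoint. With the open points of each `D i`, this gives countably many disjoint
families, plus the same families for the reversed order.

A nonempty open set contains an open convex `W` meeting some `D n` only in a point `d`. If `W`
lies in `(-∞, d]`, reverse the order and go to the situation of `V` below. Otherwise pick
`b ∈ D m ∩ W` right of `d`: either the left part of the hull of `b`, cut at `d`, is nonempty, or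
`b` has an isolating neighbourhood `V ⊆ W ∩ [b, ∞)`. If `V = {b}` it is an open point; else take
`f ∈ D k ∩ V` right of `b`. If `f` is the successor of `b` in `D k`, the right-closed hull of `b`
cut at `f` lies in `V`. Otherwise some `g ∈ D k` lies between them, and either the left part of
the hull of `g` cut at `b` works, or the right-closed hull of `g` does, because the point `f` of
`D k` bounds it.
-/

open Set OrderDual

instance {L : Type*} [TopologicalSpace L] [T1Space L] : T1Space Lᵒᵈ := ‹T1Space L›

def LocallyOrdConnected (L : Type*) [LinearOrder L] [TopologicalSpace L] : Prop :=
  ∀ ⦃U : Set L⦄ ⦃x : L⦄, IsOpen U → x ∈ U → ∃ V ⊆ U, IsOpen V ∧ V.OrdConnected ∧ x ∈ V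

theorem locallyOrdConnected_of_eq_generateFrom {L : Type*} [LinearOrder L]
    [t : TopologicalSpace L] {C : Set (Set L)} (hC : ∀ s ∈ C, s.OrdConnected)
    (ht : t = TopologicalSpace.generateFrom C) : LocallyOrdConnected L := by
  intro U x hU hx
  have hB := TopologicalSpace.isTopologicalBasis_of_subbasis ht
  obtain ⟨_, ⟨F, hF, rfl⟩, hxF, hFU⟩ := hB.exists_subset_of_mem_open hx hU
  exact ⟨_, hFU, hB.isOpen ⟨F, hF, rfl⟩, ordConnected_sInter fun s hs => hC s (hF.2 hs), hxF⟩

section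

variable {L : Type*} [LinearOrder L] [TopologicalSpace L]

theorem LocallyOrdConnected.dual (hL : LocallyOrdConnected L) : LocallyOrdConnected Lᵒᵈ :=
  fun _ _ hU hx =>
    let ⟨V, hVU, hV, hVc, hxV⟩ := hL hU hx
    ⟨ofDual ⁻¹' V, hVU, hV, hVc.dual, hxV⟩

variable [T1Space L]

theorem LocallyOrdConnected.isOpen_Ioi (hL : LocallyOrdConnected L) (a : L) :
    IsOpen (Ioi a) := by
  refine isOpen_iff_forall_mem_open.2 fun x hx => ?_
  obtain ⟨V, hVa, hV, hVc, hxV⟩ := hL isOpen_compl_singleton hx.ne'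
  refine ⟨V, fun y hy => not_le.1 fun hya => ?_, hV, hxV⟩
  exact hVa (hVc.out hy hxV ⟨hya, hx.le⟩) rfl

theorem LocallyOrdConnected.isOpen_Iio (hL : LocallyOrdConnected L) (a : L) :
    IsOpen (Iio a) :=
  hL.dual.isOpen_Ioi (toDual a)

theorem LocallyOrdConnected.isOpen_Ioo (hL : LocallyOrdConnected L) (a b : L) :
    IsOpen (Ioo a b) :=
  (hL.isOpen_Ioi a).inter (hL.isOpen_Iio b)

end

section

variable {L : Type*} [LinearOrder L] {A B : Set L} {a b : L}

theorem eq_of_disjoint_Ioo_right {b b' : L} (hb : b ∈ B) (hb' : b' ∈ B) (hab : a < b)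
    (hab' : a < b') (h : Disjoint (Ioo a b) B) (h' : Disjoint (Ioo a b') B) : b = b' := by
  by_contra hne
  rcases lt_or_gt_of_ne hne with hlt | hlt
  · exact disjoint_left.1 h' ⟨hab, hlt⟩ hb
  · exact disjoint_left.1 h ⟨hab', hlt⟩ hb'

theorem eq_of_disjoint_Ioo_left {a' : L} (ha : a ∈ A) (ha' : a' ∈ A) (hab : a < b)
    (ha'b : a' < b) (h : Disjoint (Ioo a b) A) (h' : Disjoint (Ioo a' b) A) : a = a' := by
  by_contra hne
  rcases lt_or_gt_of_ne hne with hlt | hlt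
  · exact disjoint_left.1 h ⟨hlt, ha'b⟩ ha'
  · exact disjoint_left.1 h' ⟨hlt, hab⟩ ha

end

section

variable {L : Type*} [TopologicalSpace L]

def openSingletons (A : Set L) : Set (Set L) :=
  {u | IsOpen u ∧ ∃ a ∈ A, u = {a}}

theorem pairwiseDisjoint_openSingletons (A : Set L) : (openSingletons A).PairwiseDisjoint id := by
  rintro _ ⟨-, a, -, rfl⟩ _ ⟨-, a', -, rfl⟩ hne
  exact disjoint_singleton.2 fun h => hne (h ▸ rfl)

end

section

variable {L : Type*} [LinearOrder L] [TopologicalSpace L]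

def IsIsolatingNhd (A : Set L) (a : L) (V : Set L) : Prop :=
  IsOpen V ∧ V.OrdConnected ∧ a ∈ V ∧ V ∩ A ⊆ {a}

theorem IsIsolatingNhd.dual {A V : Set L} {a : L} (h : IsIsolatingNhd A a V) :
    IsIsolatingNhd (ofDual ⁻¹' A) (toDual a) (ofDual ⁻¹' V) :=
  ⟨h.1, h.2.1.dual, h.2.2⟩

theorem LocallyOrdConnected.exists_isIsolatingNhd_subset (hL : LocallyOrdConnected L)
    {A U : Set L} [DiscreteTopology A] {a : L} (ha : a ∈ A) (hU : IsOpen U) (haU : a ∈ U) :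
    ∃ V ⊆ U, IsIsolatingNhd A a V := by
  obtain ⟨O, hO, hOA⟩ :=
    isOpen_inter_eq_singleton_of_mem_discrete (isDiscrete_iff_discreteTopology.2 ‹_›) ha
  obtain ⟨V, hVOU, hV, hVc, haV⟩ := hL (hO.inter hU) ⟨(hOA.ge rfl).1, haU⟩
  exact ⟨V, hVOU.trans inter_subset_right, hV, hVc, haV,
    fun x hx => hOA.le ⟨(hVOU hx.1).1, hx.2⟩⟩

def isolatingHull (A S : Set L) (a : L) : Set L :=
  ⋃₀ {V | IsIsolatingNhd A a V ∧ V ⊆ S}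

variable {A B S V : Set L} {a b x : L}

theorem IsIsolatingNhd.subset_isolatingHull (hV : IsIsolatingNhd A a V) (hVS : V ⊆ S) :
    V ⊆ isolatingHull A S a :=
  subset_sUnion_of_mem ⟨hV, hVS⟩

theorem isOpen_isolatingHull : IsOpen (isolatingHull A S a) :=
  isOpen_sUnion fun _ hV => hV.1.1

theorem ordConnected_isolatingHull : (isolatingHull A S a).OrdConnected :=
  ordConnected_of_uIcc_subset_left fun _ ⟨_, hV, hyV⟩ =>
    (hV.1.2.1.uIcc_subset hV.1.2.2.1 hyV).trans (subset_sUnion_of_mem hV)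

theorem isolatingHull_subset : isolatingHull A S a ⊆ S :=
  sUnion_subset fun _ hV => hV.2

theorem eq_of_mem_isolatingHull (hx : x ∈ isolatingHull A S a) (hxA : x ∈ A) : x = a :=
  let ⟨_, hV, hxV⟩ := hx
  hV.1.2.2.2 ⟨hxV, hxA⟩

theorem self_mem_isolatingHull (h : (isolatingHull A S a).Nonempty) :
    a ∈ isolatingHull A S a :=
  let ⟨_, _, hV, _⟩ := h
  subset_sUnion_of_mem hV hV.1.2.2.1

theorem disjoint_isolatingHull_Ici {a a' : L} (ha : a ∈ A) (ha' : a' ∈ A) (hne : a ≠ a') :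
    Disjoint (isolatingHull A (Ici a) a) (isolatingHull A (Ici a') a') := by
  wlog hlt : a < a' generalizing a a'
  · exact (this ha' ha hne.symm (hne.lt_or_gt.resolve_left hlt)).symm
  refine disjoint_left.2 fun x hx hx' => hlt.ne' (eq_of_mem_isolatingHull (S := Ici a) ?_ ha')
  exact ordConnected_isolatingHull.out (self_mem_isolatingHull ⟨x, hx⟩) hx
    ⟨hlt.le, isolatingHull_subset hx'⟩

theorem disjoint_isolatingHull_inter_Iio {b b' : L} (hb : b ∈ B) (hb' : b' ∈ B) (hne : b ≠ b') :
    Disjoint (isolatingHull B S b ∩ Iio b) (isolatingHull B S b' ∩ Iio b') := by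
  wlog hlt : b < b' generalizing b b'
  · exact (this hb' hb hne.symm (hne.lt_or_gt.resolve_left hlt)).symm
  refine disjoint_left.2 fun x hx hx' => hlt.ne (eq_of_mem_isolatingHull (S := S) ?_ hb)
  exact ordConnected_isolatingHull.out hx'.1 (self_mem_isolatingHull ⟨x, hx'.1⟩)
    ⟨hx.2.le, hlt.le⟩

def rightHulls (A : Set L) : Set (Set L) :=
  {u | u.Nonempty ∧ ∃ a ∈ A, u = isolatingHull A (Ici a) a}

-- `Disjoint (Ioo a b) B` makes `b` the successor of `a` in `B` (below, `Disjoint (Ioo a b) A`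
-- makes `a` the predecessor of `b` in `A`), so each cut is determined by the point of its hull.
def rightHullsCut (A B : Set L) : Set (Set L) :=
  {u | u.Nonempty ∧ ∃ a ∈ A, ∃ b ∈ B, a < b ∧ Disjoint (Ioo a b) B ∧
    u = isolatingHull A (Ici a) a ∩ Iio b}

def leftHullsCut (A B : Set L) : Set (Set L) :=
  {u | u.Nonempty ∧ ∃ a ∈ A, ∃ b ∈ B, a < b ∧ Disjoint (Ioo a b) A ∧
    u = isolatingHull B univ b ∩ Ioo a b}

theorem pairwiseDisjoint_rightHulls (A : Set L) : (rightHulls A).PairwiseDisjoint id := by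
  rintro _ ⟨-, a, ha, rfl⟩ _ ⟨-, a', ha', rfl⟩ hne
  exact disjoint_isolatingHull_Ici ha ha' fun h => hne (h ▸ rfl)

theorem pairwiseDisjoint_rightHullsCut (A B : Set L) :
    (rightHullsCut A B).PairwiseDisjoint id := by
  rintro _ ⟨-, a, ha, b, hb, hab, hB, rfl⟩ _ ⟨-, a', ha', b', hb', hab', hB', rfl⟩ hne
  by_cases haa : a = a'
  · subst haa
    exact absurd (by rw [eq_of_disjoint_Ioo_right hb hb' hab hab' hB hB']) hne
  · exact (disjoint_isolatingHull_Ici ha ha' haa).mono inter_subset_left inter_subset_left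

theorem pairwiseDisjoint_leftHullsCut (A B : Set L) :
    (leftHullsCut A B).PairwiseDisjoint id := by
  rintro _ ⟨-, a, ha, b, hb, hab, hA, rfl⟩ _ ⟨-, a', ha', b', hb', hab', hA', rfl⟩ hne
  by_cases hbb : b = b'
  · subst hbb
    exact absurd (by rw [eq_of_disjoint_Ioo_left ha ha' hab hab' hA hA']) hne
  · exact (disjoint_isolatingHull_inter_Iio hb hb' hbb).mono
      (inter_subset_inter_right _ Ioo_subset_Iio_self)
      (inter_subset_inter_right _ Ioo_subset_Iio_self)

def pieces (D : ℕ → Set L) : Fin 4 × ℕ × ℕ → Set (Set L)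
  | (0, i, _) => openSingletons (D i)
  | (1, i, _) => rightHulls (D i)
  | (2, i, j) => rightHullsCut (D i) (D j)
  | (3, i, j) => leftHullsCut (D i) (D j)

theorem pairwiseDisjoint_pieces (D : ℕ → Set L) : ∀ p, (pieces D p).PairwiseDisjoint id
  | (0, i, _) => pairwiseDisjoint_openSingletons (D i)
  | (1, i, _) => pairwiseDisjoint_rightHulls (D i)
  | (2, i, j) => pairwiseDisjoint_rightHullsCut (D i) (D j)
  | (3, i, j) => pairwiseDisjoint_leftHullsCut (D i) (D j)

-- The `false` pieces are those of the reversed order `Lᵒᵈ`, read as sets of `L`.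
def allPieces (D : ℕ → Set L) : Bool × Fin 4 × ℕ × ℕ → Set (Set L)
  | (true, p) => pieces D p
  | (false, p) => pieces (L := Lᵒᵈ) (fun n => ofDual ⁻¹' D n) p

theorem pairwiseDisjoint_allPieces (D : ℕ → Set L) : ∀ p, (allPieces D p).PairwiseDisjoint id
  | (true, p) => pairwiseDisjoint_pieces D p
  | (false, p) => pairwiseDisjoint_pieces (L := Lᵒᵈ) _ p

variable [T1Space L] {D : ℕ → Set L}

theorem LocallyOrdConnected.nonempty_isOpen_of_mem_pieces (hL : LocallyOrdConnected L) :
    ∀ p, ∀ u ∈ pieces D p, u.Nonempty ∧ IsOpen u := by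
  rintro ⟨k, _, _⟩ u hu
  match k with
  | 0 =>
    obtain ⟨hu, a, -, rfl⟩ := hu
    exact ⟨singleton_nonempty a, hu⟩
  | 1 =>
    obtain ⟨hne, a, -, rfl⟩ := hu
    exact ⟨hne, isOpen_isolatingHull⟩
  | 2 =>
    obtain ⟨hne, a, -, b, -, -, -, rfl⟩ := hu
    exact ⟨hne, isOpen_isolatingHull.inter (hL.isOpen_Iio b)⟩
  | 3 =>
    obtain ⟨hne, a, -, b, -, -, -, rfl⟩ := hu
    exact ⟨hne, isOpen_isolatingHull.inter (hL.isOpen_Ioo a b)⟩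

theorem LocallyOrdConnected.nonempty_isOpen_of_mem_allPieces (hL : LocallyOrdConnected L) :
    ∀ p, ∀ u ∈ allPieces D p, u.Nonempty ∧ IsOpen u
  | (true, p) => hL.nonempty_isOpen_of_mem_pieces p
  | (false, p) => hL.dual.nonempty_isOpen_of_mem_pieces p

theorem LocallyOrdConnected.exists_leftHullsCut_or_isIsolatingNhd_Ici
    (hL : LocallyOrdConnected L) {W : Set L} [DiscreteTopology B]
    (hW : IsIsolatingNhd A a W) (ha : a ∈ A) (hb : b ∈ B) (hbW : b ∈ W) (hab : a < b) :
    (∃ u ∈ leftHullsCut A B, u ⊆ W) ∨ ∃ V ⊆ W, IsIsolatingNhd B b V ∧ V ⊆ Ici b := by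
  have hIoo : Ioo a b ⊆ W := fun x hx => hW.2.1.out hW.2.2.1 hbW (Ioo_subset_Icc_self hx)
  by_cases hne : (isolatingHull B univ b ∩ Ioo a b).Nonempty
  · refine Or.inl ⟨_, ⟨hne, a, ha, b, hb, hab, ?_, rfl⟩, inter_subset_right.trans hIoo⟩
    exact disjoint_left.2 fun x hx hxA => hx.1.ne' (hW.2.2.2 ⟨hIoo hx, hxA⟩)
  · obtain ⟨V, hVW, hV⟩ :=
      hL.exists_isIsolatingNhd_subset hb (hW.1.inter (hL.isOpen_Ioi a)) ⟨hbW, hab⟩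
    refine Or.inr ⟨V, hVW.trans inter_subset_left, hV, fun x hxV => not_lt.1 fun hxb => ?_⟩
    exact hne ⟨x, hV.subset_isolatingHull (subset_univ V) hxV, (hVW hxV).2, hxb⟩

theorem LocallyOrdConnected.exists_pieces_subset_of_subset_Ici (hL : LocallyOrdConnected L)
    (hdense : Dense (⋃ n, D n)) (hdisc : ∀ n, DiscreteTopology (D n)) {m : ℕ}
    (hV : IsIsolatingNhd (D m) a V) (ha : a ∈ D m) (hVa : V ⊆ Ici a) :
    ∃ p, ∃ u ∈ pieces D p, u ⊆ V := by
  rcases (V ∩ Ioi a).eq_empty_or_nonempty with hright | hright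
  · have hVeq : V = {a} := Subset.antisymm
      (fun x hx => ((hVa hx).eq_or_lt.resolve_right fun h => hright.subset ⟨hx, h⟩).symm)
      (singleton_subset_iff.2 hV.2.2.1)
    exact ⟨(0, m, 0), {a}, ⟨hVeq ▸ hV.1, a, ha, rfl⟩, hVeq.ge⟩
  obtain ⟨f, hf, hfV, haf⟩ := hdense.exists_mem_open (hV.1.inter (hL.isOpen_Ioi a)) hright
  obtain ⟨k, hfk⟩ := mem_iUnion.1 hf
  have hIcc : Icc a f ⊆ V := hV.2.1.out hV.2.2.1 hfV
  by_cases hcut : Disjoint (Ioo a f) (D k)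
  · have ha_mem : a ∈ isolatingHull (D m) (Ici a) a := hV.subset_isolatingHull hVa hV.2.2.1
    exact ⟨(2, m, k), isolatingHull (D m) (Ici a) a ∩ Iio f,
      ⟨⟨a, ha_mem, haf⟩, a, ha, f, hfk, haf, hcut, rfl⟩,
      fun x hx => hIcc ⟨isolatingHull_subset hx.1, hx.2.le⟩⟩
  obtain ⟨g, hg, hgk⟩ := not_disjoint_iff.1 hcut
  have := hdisc k
  rcases hL.exists_leftHullsCut_or_isIsolatingNhd_Ici hV ha hgk (hIcc (Ioo_subset_Icc_self hg))
    hg.1 with ⟨u, hu, huV⟩ | ⟨V', -, hV', hV'g⟩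
  · exact ⟨(3, m, k), u, hu, huV⟩
  have hg_mem : g ∈ isolatingHull (D k) (Ici g) g := hV'.subset_isolatingHull hV'g hV'.2.2.1
  have hsub : isolatingHull (D k) (Ici g) g ⊆ V := by
    refine fun x hx => hIcc ⟨hg.1.le.trans (isolatingHull_subset hx), not_lt.1 fun hfx => ?_⟩
    -- `f` is a point of `D k` other than `g`, so it bounds the hull of `g` from the right
    refine hg.2.ne' (eq_of_mem_isolatingHull (S := Ici g) ?_ hfk)
    exact ordConnected_isolatingHull.out hg_mem hx ⟨hg.2.le, hfx.le⟩
  exact ⟨(1, k, 0), _, ⟨⟨g, hg_mem⟩, g, hgk, rfl⟩, hsub⟩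

theorem LocallyOrdConnected.exists_pieces_subset_of_nonempty_Ioi (hL : LocallyOrdConnected L)
    (hdense : Dense (⋃ n, D n)) (hdisc : ∀ n, DiscreteTopology (D n)) {n : ℕ} {W : Set L}
    (hW : IsIsolatingNhd (D n) a W) (ha : a ∈ D n) (hright : (W ∩ Ioi a).Nonempty) :
    ∃ p, ∃ u ∈ pieces D p, u ⊆ W := by
  obtain ⟨b, hb, hbW, hab⟩ := hdense.exists_mem_open (hW.1.inter (hL.isOpen_Ioi a)) hright
  obtain ⟨m, hbm⟩ := mem_iUnion.1 hb
  have := hdisc m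
  rcases hL.exists_leftHullsCut_or_isIsolatingNhd_Ici hW ha hbm hbW hab with
    ⟨u, hu, huW⟩ | ⟨V, hVW, hV, hVb⟩
  · exact ⟨(3, n, m), u, hu, huW⟩
  · obtain ⟨p, u, hu, huV⟩ := hL.exists_pieces_subset_of_subset_Ici hdense hdisc hV hbm hVb
    exact ⟨p, u, hu, huV.trans hVW⟩

theorem LocallyOrdConnected.exists_allPieces_subset (hL : LocallyOrdConnected L)
    (hdense : Dense (⋃ n, D n)) (hdisc : ∀ n, DiscreteTopology (D n)) {O : Set L}
    (hO : IsOpen O) (hne : O.Nonempty) : ∃ p, ∃ u ∈ allPieces D p, u ⊆ O := by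
  obtain ⟨a, ha, haO⟩ := hdense.exists_mem_open hO hne
  obtain ⟨n, han⟩ := mem_iUnion.1 ha
  have := hdisc n
  obtain ⟨W, hWO, hW⟩ := hL.exists_isIsolatingNhd_subset han hO haO
  rcases (W ∩ Ioi a).eq_empty_or_nonempty with hright | hright
  · obtain ⟨p, u, hu, huW⟩ := hL.dual.exists_pieces_subset_of_subset_Ici hdense hdisc hW.dual han
      fun x hx => not_lt.1 fun hax => hright.subset ⟨hx, hax⟩
    exact ⟨(false, p), u, hu, huW.trans hWO⟩
  · obtain ⟨p, u, hu, huW⟩ := hL.exists_pieces_subset_of_nonempty_Ioi hdense hdisc hW han hright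
    exact ⟨(true, p), u, hu, huW.trans hWO⟩

end

theorem stmt_7 {L : Type*} [LinearOrder L] [t : TopologicalSpace L] [T2Space L]
    (hGO : ∃ C : Set (Set L), (∀ s ∈ C, s.OrdConnected) ∧
      t = TopologicalSpace.generateFrom C)
    (D : ℕ → Set L) (hdense : Dense (⋃ n, D n))
    (hdisc : ∀ n, DiscreteTopology (D n)) :
    ∃ 𝒰 : ℕ → Set (Set L),
      (∀ n, (𝒰 n).PairwiseDisjoint id) ∧
      (∀ n, ∀ u ∈ 𝒰 n, u.Nonempty ∧ IsOpen u) ∧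
      (∀ O : Set L, IsOpen O → O.Nonempty → ∃ n, ∃ u ∈ 𝒰 n, u ⊆ O) := by
  obtain ⟨C, hC, ht⟩ := hGO
  have hL := locallyOrdConnected_of_eq_generateFrom hC ht
  obtain ⟨f, hf⟩ := exists_surjective_nat (Bool × Fin 4 × ℕ × ℕ)
  refine ⟨allPieces D ∘ f, fun i => pairwiseDisjoint_allPieces D (f i),
    fun i => hL.nonempty_isOpen_of_mem_allPieces (f i), fun O hO hne => ?_⟩
  obtain ⟨p, u, hu, huO⟩ := hL.exists_allPieces_subset hdense hdisc hO hne
  obtain ⟨i, rfl⟩ := hf p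
  exact ⟨i, u, hu, huO⟩
end

section
/- Every separable GO-space has a σ-disjoint π-base. -/
/-!
Distinct minimal nonempty open sets are disjoint, so they form a single disjoint family, and the
nonempty intervals `(p, q)` with endpoints in a countable dense set `D` form countably many
singleton families. In a GO-space open rays are open and every nonempty open set contains a
convex open set `b`. If `b` is finite it contains a minimal nonempty open set. Otherwise pick
`x₁ < ⋯ < x₅` in `b`: the open intervals `(x₁, x₃)` and `(x₃, x₅)` meet `D` in points `p` and `q`,
and `x₃ ∈ (p, q) ⊆ b`.
-/

open Set TopologicalSpace

section MinimalOpens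

variable {X : Type*} [TopologicalSpace X]

variable (X) in
def minimalOpens : Set (Set X) :=
  {u | Minimal (fun v : Set X => IsOpen v ∧ v.Nonempty) u}

theorem mem_minimalOpens {u : Set X} :
    u ∈ minimalOpens X ↔ Minimal (fun v : Set X => IsOpen v ∧ v.Nonempty) u :=
  Iff.rfl

theorem pairwiseDisjoint_minimalOpens : (minimalOpens X).PairwiseDisjoint id := by
  intro u hu v hv huv
  rw [mem_minimalOpens] at hu hv
  by_contra hdisj
  have hinter : IsOpen (u ∩ v) ∧ (u ∩ v).Nonempty :=
    ⟨hu.prop.1.inter hv.prop.1, not_disjoint_iff_nonempty_inter.mp hdisj⟩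
  exact huv ((hu.eq_of_subset hinter inter_subset_left).symm.trans
    (hv.eq_of_subset hinter inter_subset_right))

theorem Set.Finite.exists_minimalOpens_subset {b : Set X} (hb : b.Finite) (hbo : IsOpen b)
    (hne : b.Nonempty) : ∃ u ∈ minimalOpens X, u ⊆ b := by
  have hfin : {v | v ⊆ b ∧ IsOpen v ∧ v.Nonempty}.Finite := hb.finite_subsets.subset fun _ h => h.1
  obtain ⟨u, hub, hmin⟩ := hfin.exists_le_minimal ⟨subset_rfl, hbo, hne⟩
  refine ⟨u, mem_minimalOpens.mpr ⟨hmin.prop.2, fun v hv hvu => ?_⟩, hub⟩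
  exact hmin.le_of_le ⟨hvu.trans hub, hv⟩ hvu

end MinimalOpens

theorem exists_seq_pairwiseDisjoint_iUnion_eq_union {X : Type*} {𝒜 𝒱 : Set (Set X)}
    (h𝒜 : 𝒜.PairwiseDisjoint id) (h𝒱 : 𝒱.Countable) :
    ∃ 𝒰 : ℕ → Set (Set X), (∀ n, (𝒰 n).PairwiseDisjoint id) ∧ ⋃ n, 𝒰 n = 𝒜 ∪ 𝒱 := by
  have : Countable 𝒱 := h𝒱
  obtain ⟨f, hf⟩ := Countable.exists_injective_nat 𝒱
  refine ⟨fun | 0 => 𝒜 | m + 1 => (↑) '' (f ⁻¹' {m}), ?_, ?_⟩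
  · rintro (_ | m)
    · exact h𝒜
    · exact ((subsingleton_singleton.preimage hf).image _).pairwise _
  · refine Subset.antisymm (iUnion_subset ?_)
      (union_subset (subset_iUnion_of_subset 0 subset_rfl) ?_)
    · rintro (_ | m)
      · exact subset_union_left
      · rintro _ ⟨v, -, rfl⟩
        exact Or.inr v.2
    · intro v hv
      exact mem_iUnion.mpr ⟨f ⟨v, hv⟩ + 1, ⟨v, hv⟩, rfl, rfl⟩

section OrdConnectedBasis

variable {L : Type*} [LinearOrder L] [TopologicalSpace L]

theorem exists_isTopologicalBasis_ordConnected {C : Set (Set L)} (hC : ∀ s ∈ C, s.OrdConnected)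
    (hgen : ‹TopologicalSpace L› = generateFrom C) :
    ∃ B : Set (Set L), IsTopologicalBasis B ∧ ∀ s ∈ B, s.OrdConnected := by
  refine ⟨_, isTopologicalBasis_of_subbasis hgen, ?_⟩
  rintro _ ⟨f, ⟨-, hfC⟩, rfl⟩
  exact ordConnected_sInter fun s hs => hC s (hfC hs)

variable [T1Space L] {B : Set (Set L)}

theorem closedIicTopology_of_isTopologicalBasis_ordConnected (hB : IsTopologicalBasis B)
    (hBconv : ∀ s ∈ B, s.OrdConnected) : ClosedIicTopology L := by
  refine ⟨fun a => isOpen_compl_iff.mp ?_⟩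
  rw [compl_Iic, isOpen_iff_forall_mem_open]
  intro x (hx : a < x)
  obtain ⟨W, hWB, hxW, hWa⟩ :=
    hB.exists_subset_of_mem_open (mem_compl_singleton_iff.mpr hx.ne') isOpen_compl_singleton
  refine ⟨W, fun w hw => not_le.mp fun hwa => ?_, hB.isOpen hWB, hxW⟩
  exact hWa ((hBconv W hWB).out hw hxW ⟨hwa, hx.le⟩) rfl

theorem closedIciTopology_of_isTopologicalBasis_ordConnected (hB : IsTopologicalBasis B)
    (hBconv : ∀ s ∈ B, s.OrdConnected) : ClosedIciTopology L := by
  refine ⟨fun a => isOpen_compl_iff.mp ?_⟩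
  rw [compl_Ici, isOpen_iff_forall_mem_open]
  intro x (hx : x < a)
  obtain ⟨W, hWB, hxW, hWa⟩ :=
    hB.exists_subset_of_mem_open (mem_compl_singleton_iff.mpr hx.ne) isOpen_compl_singleton
  refine ⟨W, fun w hw => not_le.mp fun haw => ?_, hB.isOpen hWB, hxW⟩
  exact hWa ((hBconv W hWB).out hxW hw ⟨hx.le, haw⟩) rfl

end OrdConnectedBasis

section OpenRays

variable {L : Type*} [LinearOrder L] [TopologicalSpace L] [ClosedIicTopology L]
  [ClosedIciTopology L] {D : Set L}

theorem isOpen_Ioo_of_closedIicTopology_of_closedIciTopology (a b : L) : IsOpen (Ioo a b) :=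
  isOpen_Ioi.inter isOpen_Iio

theorem Set.OrdConnected.exists_Ioo_subset_of_infinite (hD : Dense D) {b : Set L}
    (hb : b.OrdConnected) (hinf : b.Infinite) :
    ∃ p ∈ D, ∃ q ∈ D, (Ioo p q).Nonempty ∧ Ioo p q ⊆ b := by
  have hIoo := isOpen_Ioo_of_closedIicTopology_of_closedIciTopology (L := L)
  obtain ⟨t, htb, ht⟩ := hinf.exists_subset_card_eq 5
  set x := t.orderEmbOfFin ht
  have hxb (i : Fin 5) : x i ∈ b := htb (t.orderEmbOfFin_mem ht i)
  have hx {i j : Fin 5} (h : i < j) : x i < x j := x.strictMono h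
  obtain ⟨p, hpD, hxp, hpx⟩ :=
    hD.exists_mem_open (hIoo (x 0) (x 2)) ⟨x 1, hx (by decide), hx (by decide)⟩
  obtain ⟨q, hqD, hxq, hqx⟩ :=
    hD.exists_mem_open (hIoo (x 2) (x 4)) ⟨x 3, hx (by decide), hx (by decide)⟩
  have hpb : p ∈ b := hb.out (hxb 0) (hxb 2) ⟨hxp.le, hpx.le⟩
  have hqb : q ∈ b := hb.out (hxb 2) (hxb 4) ⟨hxq.le, hqx.le⟩
  exact ⟨p, hpD, q, hqD, ⟨x 2, hpx, hxq⟩, Ioo_subset_Icc_self.trans (hb.out hpb hqb)⟩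

theorem exists_minimalOpens_or_Ioo_subset {B : Set (Set L)} (hB : IsTopologicalBasis B)
    (hBconv : ∀ s ∈ B, s.OrdConnected) (hD : Dense D) {O : Set L} (hO : IsOpen O)
    (hne : O.Nonempty) :
    (∃ u ∈ minimalOpens L, u ⊆ O) ∨ ∃ p ∈ D, ∃ q ∈ D, (Ioo p q).Nonempty ∧ Ioo p q ⊆ O := by
  obtain ⟨x, hxO⟩ := hne
  obtain ⟨W, hWB, hxW, hWO⟩ := hB.exists_subset_of_mem_open hxO hO
  rcases W.finite_or_infinite with hfin | hinf
  · obtain ⟨u, hu, huW⟩ := hfin.exists_minimalOpens_subset (hB.isOpen hWB) ⟨x, hxW⟩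
    exact Or.inl ⟨u, hu, huW.trans hWO⟩
  · obtain ⟨p, hp, q, hq, hpq, hsub⟩ := (hBconv W hWB).exists_Ioo_subset_of_infinite hD hinf
    exact Or.inr ⟨p, hp, q, hq, hpq, hsub.trans hWO⟩

end OpenRays

theorem stmt_8 {L : Type*} [LinearOrder L] [t : TopologicalSpace L] [T2Space L]
    [TopologicalSpace.SeparableSpace L]
    (hGO : ∃ C : Set (Set L), (∀ s ∈ C, s.OrdConnected) ∧
      t = TopologicalSpace.generateFrom C) :
    ∃ 𝒰 : ℕ → Set (Set L),
      (∀ n, (𝒰 n).PairwiseDisjoint id) ∧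
      (∀ n, ∀ u ∈ 𝒰 n, u.Nonempty ∧ IsOpen u) ∧
      (∀ O : Set L, IsOpen O → O.Nonempty → ∃ n, ∃ u ∈ 𝒰 n, u ⊆ O) := by
  obtain ⟨C, hC, hgen⟩ := hGO
  obtain ⟨B, hB, hBconv⟩ := exists_isTopologicalBasis_ordConnected hC hgen
  have := closedIicTopology_of_isTopologicalBasis_ordConnected hB hBconv
  have := closedIciTopology_of_isTopologicalBasis_ordConnected hB hBconv
  obtain ⟨D, hDc, hD⟩ := exists_countable_dense L
  obtain ⟨𝒰, h𝒰disj, h𝒰⟩ := exists_seq_pairwiseDisjoint_iUnion_eq_union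
    pairwiseDisjoint_minimalOpens ((hDc.image2 hDc Ioo).mono (sep_subset _ Set.Nonempty))
  have mem_𝒰 {u : Set L} : (∃ n, u ∈ 𝒰 n) ↔ u ∈ minimalOpens L ∨
      (∃ p ∈ D, ∃ q ∈ D, Ioo p q = u) ∧ u.Nonempty := by
    rw [← mem_iUnion, h𝒰]; rfl
  refine ⟨𝒰, h𝒰disj, fun n u hu => ?_, fun O hO hne => ?_⟩
  · rcases mem_𝒰.mp ⟨n, hu⟩ with hmin | ⟨⟨p, -, q, -, rfl⟩, hne⟩
    · exact (mem_minimalOpens.mp hmin).prop.symm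
    · exact ⟨hne, isOpen_Ioo_of_closedIicTopology_of_closedIciTopology p q⟩
  · rcases exists_minimalOpens_or_Ioo_subset hB hBconv hD hO hne with
      ⟨u, hu, huO⟩ | ⟨p, hp, q, hq, hpq, hsub⟩
    · obtain ⟨n, hn⟩ := mem_𝒰.mpr (Or.inl hu)
      exact ⟨n, u, hn, huO⟩
    · obtain ⟨n, hn⟩ := mem_𝒰.mpr (Or.inr ⟨⟨p, hp, q, hq, rfl⟩, hpq⟩)
      exact ⟨n, _, hn, hsub⟩
end

section
/- Every subspace of an ordinal (with the order topology from the ordinal, restricted to the subspace) has a dense subset that is a countable union of subspaces discrete in themselves; in fact, the set of points isolated in the subspace is dense in it, hence a single discrete-in-itself dense subset suffices when the subspace consists of ordinals, i.e., any subspace of an ordinal with the subspace order topology has a σ-disjoint π-base. -/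
/-!
In a well-order with a successor function, `Iic x = Iio (succ x)` is open. Hence, in any subspace
`L`, the least element `x` of a nonempty open set `O` is isolated: `{x} = O ∩ Iic x`. So the isolated
points of `L` are dense, and their singletons form a single disjoint π-base.
-/

open Set

theorem isOpen_Iic_of_succOrder {α : Type*} [LinearOrder α] [TopologicalSpace α] [OrderTopology α]
    [SuccOrder α] (a : α) : IsOpen (Iic a) := by
  by_cases ha : IsMax a
  · simp [ha.isTop.Iic_eq]
  · simpa [Order.Iio_succ_of_not_isMax ha] using isOpen_Iio (a := Order.succ a)

theorem exists_mem_isOpen_singleton_of_isOpen {α : Type*} [LinearOrder α] [TopologicalSpace α]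
    [OrderTopology α] [SuccOrder α] [WellFoundedLT α] {L : Set α} {O : Set L} (hO : IsOpen O)
    (hne : O.Nonempty) : ∃ x ∈ O, IsOpen ({x} : Set L) := by
  obtain ⟨x, hxO, hmin⟩ := wellFounded_lt.has_min O hne
  have hx : O ∩ Subtype.val ⁻¹' Iic (x : α) = {x} := by
    ext z
    simp only [mem_inter_iff, mem_preimage, mem_Iic, mem_singleton_iff]
    refine ⟨fun ⟨hzO, hzx⟩ => le_antisymm hzx (not_lt.mp (hmin z hzO)), ?_⟩
    rintro rfl
    exact ⟨hxO, le_rfl⟩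
  exact ⟨x, hxO, hx ▸ hO.inter ((isOpen_Iic_of_succOrder _).preimage continuous_subtype_val)⟩

theorem stmt_9_general (L : Set Ordinal) :
    ∃ 𝒰 : ℕ → Set (Set L),
      (∀ n, (𝒰 n).PairwiseDisjoint id) ∧
      (∀ n, ∀ u ∈ 𝒰 n, u.Nonempty ∧ IsOpen u) ∧
      (∀ O : Set L, IsOpen O → O.Nonempty → ∃ n, ∃ u ∈ 𝒰 n, u ⊆ O) := by
  refine ⟨fun _ => (fun x => {x}) '' {x | IsOpen ({x} : Set L)}, fun _ => ?_, ?_, ?_⟩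
  · rw [singleton_injective.injOn.pairwiseDisjoint_image]
    exact pairwiseDisjoint_singleton' _
  · rintro _ _ ⟨x, hx, rfl⟩
    exact ⟨singleton_nonempty x, hx⟩
  · intro O hO hne
    obtain ⟨x, hxO, hx⟩ := exists_mem_isOpen_singleton_of_isOpen hO hne
    exact ⟨0, {x}, mem_image_of_mem _ hx, singleton_subset_iff.mpr hxO⟩

theorem stmt_9 (o : Ordinal) (L : Set Ordinal) (hL : ∀ x ∈ L, x < o) :
    ∃ 𝒰 : ℕ → Set (Set L),
      (∀ n, (𝒰 n).PairwiseDisjoint id) ∧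
      (∀ n, ∀ u ∈ 𝒰 n, u.Nonempty ∧ IsOpen u) ∧
      (∀ O : Set L, IsOpen O → O.Nonempty → ∃ n, ∃ u ∈ 𝒰 n, u ⊆ O) :=
  stmt_9_general L
end

section
/- Let L be a linear order with the order topology, let A, B ⊆ L be subsets each discrete in themselves, and let U ⊆ L be a nonempty open convex set with no isolated points of L inside it. Then A ∪ B is nowhere dense in U. -/
/-!
A set `T` that is discrete in itself and contains no isolated point of a T₁ space is nowhere
dense: if an open `V ⊆ closure T` met `T` at `a`, then shrinking `V` to an open set meeting `T`
only in `a` leaves an open subset of `closure {a} = {a}` containing `a`, so `a` would be isolated.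
Both `A ∩ U` and `B ∩ U` are of this kind, and a union of two nowhere dense sets is nowhere dense.
-/

open Set

section

variable {X : Type*} [TopologicalSpace X]

lemma IsNowhereDense.union {s t : Set X} (hs : IsNowhereDense s) (ht : IsNowhereDense t) :
    IsNowhereDense (s ∪ t) := by
  rw [IsNowhereDense, closure_union, interior_union_isClosed_of_interior_empty isClosed_closure ht]
  exact hs

lemma isNowhereDense_of_discreteTopology [T1Space X] {T : Set X} (hT : DiscreteTopology T)
    (hcrowded : ∀ x ∈ T, ¬ IsOpen ({x} : Set X)) : IsNowhereDense T := by
  refine isNowhereDense_iff_disjoint.2 (disjoint_left.2 fun a haT haV => hcrowded a haT ?_)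
  obtain ⟨W, hW, hWT⟩ := discreteTopology_subtype_iff'.1 hT a haT
  have hsub : interior (closure T) ∩ W ⊆ {a} := calc
    interior (closure T) ∩ W ⊆ closure T ∩ W := inter_subset_inter_left W interior_subset
    _ ⊆ closure (W ∩ T) := by rw [inter_comm]; exact hW.inter_closure
    _ = {a} := by rw [hWT, closure_singleton]
  have hWa : a ∈ W := (hWT.symm ▸ mem_singleton a : a ∈ W ∩ T).1
  rw [← subset_antisymm hsub (singleton_subset_iff.2 ⟨haV, hWa⟩)]
  exact isOpen_interior.inter hW

end

theorem stmt_11_general {L : Type*} [LinearOrder L] [TopologicalSpace L] [OrderTopology L]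
    (A B : Set L) (hA : DiscreteTopology A) (hB : DiscreteTopology B)
    (U : Set L) (hcrowded : ∀ x ∈ U, ¬ IsOpen ({x} : Set L)) :
    interior (closure ((A ∪ B) ∩ U)) ∩ U = ∅ := by
  have hnowhere (S : Set L) (hS : DiscreteTopology S) : IsNowhereDense (S ∩ U) :=
    isNowhereDense_of_discreteTopology (hS.of_subset inter_subset_left)
      fun x hx => hcrowded x hx.2
  have hAB : IsNowhereDense ((A ∪ B) ∩ U) := by
    rw [union_inter_distrib_right]
    exact (hnowhere A hA).union (hnowhere B hB)
  rw [hAB, empty_inter]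

theorem stmt_11 {L : Type*} [LinearOrder L] [TopologicalSpace L] [OrderTopology L]
    (A B : Set L) (hA : DiscreteTopology A) (hB : DiscreteTopology B)
    (U : Set L) (hUne : U.Nonempty) (hUopen : IsOpen U) (hUconv : U.OrdConnected)
    (hcrowded : ∀ x ∈ U, ¬ IsOpen ({x} : Set L)) :
    interior (closure ((A ∪ B) ∩ U)) ∩ U = ∅ :=
  stmt_11_general A B hA hB U hcrowded
end
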